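/- arXiv:0805.3933 — 3 statements merged into one kernel-verified Lean document; each statement's English description precedes it below -/
import Mathlib

section
/- Let λ₁,…,λₙ ∈ k be distinct (n ≥ 2), let vᵢ be the Lagrange interpolation polynomials, and set pᵢ(h) = vᵢ(h−1) − vᵢ(h) for 1 ≤ i ≤ n−1. Then (p₁,…,p_{n−1}) is a basis of the space k_{n−2} of polynomials of degree at most n−2. -/
/-!
Write `pᵢ = T vᵢ` with `T f = f(X - 1) - f = taylor (-1) f - f`. The operator `T` lowers
degrees, and in characteristic zero its kernel consists of the constants, since `f(X - 1) = f`
makes `f - f(0)` vanish at every `-m`, `m : ℕ`. The `vᵢ` with `i ≤ n - 1` are linearly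
independent and all vanish at `λₙ`, so their span meets the constants only in `0`; hence the
`pᵢ` are linearly independent. They lie in `k_{n-2}`, and there are `n - 1 = dim k_{n-2}` of them.
-/

open Polynomial

namespace Polynomial

variable {R : Type*}

theorem degree_taylor_sub_lt [Ring R] {f : R[X]} (hf : f ≠ 0) (r : R) :
    (taylor r f - f).degree < f.degree :=
  degree_taylor f r ▸
    degree_sub_lt_left (degree_taylor f r) ((taylor_eq_zero r f).not.2 hf) (leadingCoeff_taylor r f)

theorem eval_natCast_mul_of_taylor_eq_self [CommSemiring R] {a : R} {f : R[X]}
    (h : taylor a f = f) (m : ℕ) : f.eval (m * a) = f.eval 0 := by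
  induction m with
  | zero => simp
  | succ m ih => rw [Nat.cast_succ, add_one_mul, ← taylor_eval, h, ih]

theorem eq_C_of_taylor_eq_self [CommRing R] [IsDomain R] [CharZero R] {a : R} (ha : a ≠ 0)
    {f : R[X]} (h : taylor a f = f) : f = C (f.eval 0) := by
  refine sub_eq_zero.1 (eq_zero_of_infinite_isRoot _ ?_)
  refine Set.Infinite.mono (s := Set.range fun m : ℕ => (m : R) * a) ?_ ?_
  · rintro _ ⟨m, rfl⟩
    simp [eval_natCast_mul_of_taylor_eq_self h m]
  · exact Set.infinite_range_of_injective
      ((mul_left_injective₀ ha).comp Nat.cast_injective)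

end Polynomial

namespace Lagrange

variable {F ι : Type*} [Field F] [DecidableEq ι] {v : ι → F}

theorem linearIndependent_basis [Fintype ι] (hv : Function.Injective v) :
    LinearIndependent F (fun i => Lagrange.basis Finset.univ v i) := by
  refine Fintype.linearIndependent_iff.2 fun g hg j => ?_
  have := eval_interpolate_at_node (r := g) hv.injOn (Finset.mem_univ j)
  simpa [interpolate_apply, ← smul_eq_C_mul, hg] using this.symm

theorem eval_eq_zero_of_mem_span_basis {κ : Type*} {s : Finset ι} {e : κ → ι} {j : ι}
    (hj : j ∈ s) (hej : ∀ i, e i ≠ j) {q : F[X]}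
    (hq : q ∈ Submodule.span F (Set.range fun i => Lagrange.basis s v (e i))) :
    q.eval (v j) = 0 := by
  suffices Submodule.span F (Set.range fun i => Lagrange.basis s v (e i)) ≤
      LinearMap.ker (leval (v j)) from this hq
  rw [Submodule.span_le, Set.range_subset_iff]
  exact fun i => eval_basis_of_ne (hej i) hj

end Lagrange

/-- For distinct `λ₁, …, λₙ` with Lagrange interpolation polynomials `vᵢ`, the
family `pᵢ(h) = vᵢ(h-1) - vᵢ(h)`, `1 ≤ i ≤ n-1`, is a basis of the space of
polynomials of degree at most `n - 2` (i.e. `degreeLT k (n-1)`). -/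
theorem stmt2 (k : Type*) [Field k] [CharZero k] (n : ℕ) (hn : 2 ≤ n)
    (lam : Fin n → k) (hl : Function.Injective lam)
    (p : Fin (n - 1) → Polynomial k)
    (hp : ∀ i : Fin (n - 1),
      p i = (Lagrange.basis Finset.univ lam (Fin.castLE (by omega) i)).comp
              (Polynomial.X - 1)
            - Lagrange.basis Finset.univ lam (Fin.castLE (by omega) i)) :
    LinearIndependent k p ∧
      Submodule.span k (Set.range p) = Polynomial.degreeLT k (n - 1) := by
  set e : Fin (n - 1) → Fin n := Fin.castLE (by omega)
  set b : Fin (n - 1) → k[X] := fun i => Lagrange.basis Finset.univ lam (e i)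
  have hpb : p = (taylor (-1 : k) - LinearMap.id : k[X] →ₗ[k] k[X]) ∘ b := by
    ext1 i
    simp [hp i, b, e, taylor_apply, sub_eq_add_neg]
  have hli : LinearIndependent k p := by
    rw [hpb]
    refine ((Lagrange.linearIndependent_basis hl).comp e (Fin.castLE_injective _)).map ?_
    refine Submodule.disjoint_def.2 fun q hq hker => ?_
    have hconst := eq_C_of_taylor_eq_self (neg_ne_zero.2 one_ne_zero) (sub_eq_zero.1 hker)
    have hvanish := Lagrange.eval_eq_zero_of_mem_span_basis (j := ⟨n - 1, by omega⟩)
      (Finset.mem_univ _) (fun i h => i.is_lt.ne (congrArg Fin.val h)) hq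
    rw [hconst, eval_C] at hvanish
    rw [hconst, hvanish, map_zero]
  have hmem : ∀ i, p i ∈ degreeLT k (n - 1) := fun i => by
    have hbi := Lagrange.basis_ne_zero hl.injOn (Finset.mem_univ (e i))
    rw [mem_degreeLT, hpb]
    simpa [b, Lagrange.degree_basis hl.injOn] using degree_taylor_sub_lt hbi (-1)
  refine ⟨hli, Submodule.eq_of_le_of_finrank_eq
    (Submodule.span_le.2 (Set.range_subset_iff.2 hmem)) ?_⟩
  rw [finrank_span_eq_card hli, Module.finrank_eq_card_basis (degreeLT.basis k (n - 1))]
end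

section
/- Let a(h) = u(h)·w(h) with u, w coprime nonconstant polynomials over k, and let B, C be polynomials with B·w + C·u = 1. In the generalized Weyl algebra A = A(a) (generated over k[h] by x, y with xh=(h−1)x, yh=(h+1)y, yx=a(h), xy=a(h−1)), the map F∘G where G : A⊕A → P = Ax + Aw(h) is G(1,0)=x, G(0,1)=w(h), and F : P → A⊕A is F(x)=(C(h−1)u(h−1), B(h−1)x), F(w(h))=(C(h)y, w(h)B(h)), is an idempotent endomorphism of A⊕A, i.e. G∘F = id on P. -/
open Polynomial

/-- In the generalized Weyl algebra `A = A(a)` with `a = u·w`, `u, w` coprime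
nonconstant and `B·w + C·u = 1`, the composite `e = F ∘ G` of
`G : A ⊕ A → P = A·x + A·w(h)`, `G(1,0) = x`, `G(0,1) = w(h)` with the section
`F : P → A ⊕ A`, `F(x) = (C(h-1)u(h-1), B(h-1)x)`, `F(w(h)) = (C(h)y, w(h)B(h))`,
is an idempotent endomorphism of `A ⊕ A`, i.e. `G ∘ F = id` on `P`. -/
theorem stmt4 (k : Type*) [Field k] [IsAlgClosed k] [CharZero k]
    (a u w B C : Polynomial k) (hu : 0 < u.natDegree) (hw : 0 < w.natDegree)
    (hcop : IsCoprime u w) (ha : a = u * w) (hbez : B * w + C * u = 1)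
    (A : Type*) [Ring A] [Algebra k A] (H x y : A)
    (hgen : Algebra.adjoin k ({H, x, y} : Set A) = ⊤)
    (hx : x * H = (H - 1) * x) (hy : y * H = (H + 1) * y)
    (hyx : y * x = Polynomial.aeval H a)
    (hxy : x * y = Polynomial.aeval H (a.comp (Polynomial.X - 1)))
    (G : A × A → A) (hG : ∀ z : A × A, G z = z.1 * x + z.2 * Polynomial.aeval H w)
    (e : A × A → A × A)
    (he : ∀ z : A × A, e z =
      (z.1 * (Polynomial.aeval H (C.comp (Polynomial.X - 1)) *
                Polynomial.aeval H (u.comp (Polynomial.X - 1)))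
         + z.2 * (Polynomial.aeval H C * y),
       z.1 * (Polynomial.aeval H (B.comp (Polynomial.X - 1)) * x)
         + z.2 * (Polynomial.aeval H w * Polynomial.aeval H B))) :
    (∀ z : A × A, e (e z) = e z) ∧ (∀ z : A × A, G (e z) = G z) := by
  have hxp : ∀ p : Polynomial k, x * aeval H p = aeval H (p.comp (X - 1)) * x := by
    intro p
    induction p using Polynomial.induction_on with
    | C c => simpa using (Algebra.commutes c x).symm
    | add p q hp hq => simp [mul_add, add_mul, hp, hq, add_comp]
    | monomial n c ih =>
      have e1 : (Polynomial.C c : Polynomial k) * X ^ (n + 1)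
          = Polynomial.C c * X ^ n * X := by ring
      rw [e1, map_mul, aeval_X, ← mul_assoc, ih, mul_assoc, hx]
      conv_rhs => rw [mul_comp, X_comp, map_mul, map_sub, aeval_X, map_one]
      rw [mul_assoc]
  have hyp : ∀ p : Polynomial k, y * aeval H p = aeval H (p.comp (X + 1)) * y := by
    intro p
    induction p using Polynomial.induction_on with
    | C c => simpa using (Algebra.commutes c y).symm
    | add p q hp hq => simp [mul_add, add_mul, hp, hq, add_comp]
    | monomial n c ih =>
      have e1 : (Polynomial.C c : Polynomial k) * X ^ (n + 1)
          = Polynomial.C c * X ^ n * X := by ring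
      rw [e1, map_mul, aeval_X, ← mul_assoc, ih, mul_assoc, hy]
      conv_rhs => rw [mul_comp, X_comp, map_mul, map_add, aeval_X, map_one]
      rw [mul_assoc]
  have hyp' : ∀ p : Polynomial k, y * aeval H (p.comp (X - 1)) = aeval H p * y := by
    intro p
    rw [hyp, Polynomial.comp_assoc]
    have h2 : ((X : Polynomial k) - 1).comp (X + 1) = X := by
      simp [sub_comp]
    rw [h2, comp_X]
  have hbez' : B.comp (X - 1) * w.comp (X - 1) + C.comp (X - 1) * u.comp (X - 1)
      = (1 : Polynomial k) := by
    have := congrArg (fun p : Polynomial k => p.comp (X - 1)) hbez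
    simpa [add_comp, mul_comp] using this
  set α : A := aeval H (C.comp (X - 1)) * aeval H (u.comp (X - 1)) with hα
  set β : A := aeval H C * y with hβ
  set γ : A := aeval H (B.comp (X - 1)) * x with hγ
  set δ : A := aeval H w * aeval H B with hδ
  have hαa : α = aeval H ((C * u).comp (X - 1)) := by rw [hα, mul_comp, map_mul]
  have hδa : δ = aeval H (w * B) := by rw [hδ, map_mul]
  -- cross products
  have hγβ : γ * β = aeval H (B.comp (X - 1) * (C.comp (X - 1) * a.comp (X - 1))) := by
    rw [hγ, hβ, mul_assoc, ← mul_assoc x, hxp, mul_assoc, hxy, ← map_mul, ← map_mul]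
  have hβα : β * α = aeval H (C * (C * u)) * y := by
    rw [hβ, hα, ← map_mul, ← mul_comp, mul_assoc, hyp', ← mul_assoc, ← map_mul]
  have hδβ : δ * β = aeval H (w * B * C) * y := by
    rw [hδ, hβ, ← mul_assoc, ← map_mul, ← map_mul]
  have hαγ : α * γ = aeval H ((C * u * B).comp (X - 1)) * x := by
    rw [hα, hγ, ← mul_assoc, ← map_mul, ← map_mul, ← mul_comp, ← mul_comp]
  have hγδ : γ * δ = aeval H ((B * (w * B)).comp (X - 1)) * x := by
    rw [hγ, hδ, mul_assoc, ← map_mul, hxp, ← mul_assoc, ← map_mul, ← mul_comp]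
  have hβγ : β * γ = aeval H (C * (B * a)) := by
    rw [hβ, hγ, mul_assoc, ← mul_assoc y, hyp', mul_assoc, hyx, ← map_mul, ← map_mul]
  have hδδ : δ * δ = aeval H (w * B * (w * B)) := by
    rw [hδ, ← map_mul, ← map_mul]
  have hβx : β * x = aeval H (C * a) := by
    rw [hβ, mul_assoc, hyx, ← map_mul]
  have hγw : γ * aeval H w = aeval H ((B * w).comp (X - 1)) * x := by
    rw [hγ, mul_assoc, hxp, ← mul_assoc, ← map_mul, ← mul_comp]
  have hδw : δ * aeval H w = aeval H (w * B * w) := by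
    rw [hδ, ← map_mul, ← map_mul]
  -- the four idempotency identities
  have key1 : (C * u).comp (X - 1) * (C * u).comp (X - 1)
      + B.comp (X - 1) * (C.comp (X - 1) * a.comp (X - 1)) = (C * u).comp (X - 1) := by
    simp only [ha, mul_comp]
    linear_combination (C.comp (X - 1 : Polynomial k) * u.comp (X - 1)) * hbez'
  have I1 : α * α + γ * β = α := by
    rw [hαa, hγβ, ← map_mul, ← map_add, key1]
  have key2 : C * (C * u) + w * B * C = C := by linear_combination C * hbez
  have I2 : β * α + δ * β = β := by
    rw [hβα, hδβ, hβ, ← add_mul, ← map_add, key2]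
  have key3 : (C * u * B).comp (X - 1) + (B * (w * B)).comp (X - 1) = B.comp (X - 1) := by
    simp only [mul_comp]
    linear_combination (B.comp (X - 1 : Polynomial k)) * hbez'
  have I3 : α * γ + γ * δ = γ := by
    rw [hαγ, hγδ, hγ, ← add_mul, ← map_add, key3]
  have key4 : C * (B * a) + w * B * (w * B) = w * B := by
    rw [ha]; linear_combination (w * B) * hbez
  have I4 : β * γ + δ * δ = δ := by
    rw [hβγ, hδδ, hδa, ← map_add, key4]
  -- the two section identities
  have key5 : (C * u).comp (X - 1) + (B * w).comp (X - 1) = (1 : Polynomial k) := by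
    simp only [mul_comp]
    linear_combination hbez'
  have J1 : α * x + γ * aeval H w = x := by
    rw [hαa, hγw, ← add_mul, ← map_add, key5, map_one, one_mul]
  have key6 : C * a + w * B * w = w := by
    rw [ha]; linear_combination w * hbez
  have J2 : β * x + δ * aeval H w = aeval H w := by
    rw [hβx, hδw, ← map_add, key6]
  constructor
  · intro z
    rw [he z, he]
    dsimp only
    refine Prod.ext ?_ ?_
    · calc (z.1 * α + z.2 * β) * α + (z.1 * γ + z.2 * δ) * β
          = z.1 * (α * α + γ * β) + z.2 * (β * α + δ * β) := by noncomm_ring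
        _ = z.1 * α + z.2 * β := by rw [I1, I2]
    · calc (z.1 * α + z.2 * β) * γ + (z.1 * γ + z.2 * δ) * δ
          = z.1 * (α * γ + γ * δ) + z.2 * (β * γ + δ * δ) := by noncomm_ring
        _ = z.1 * γ + z.2 * δ := by rw [I3, I4]
  · intro z
    rw [hG, hG, he]
    dsimp only
    calc (z.1 * α + z.2 * β) * x + (z.1 * γ + z.2 * δ) * aeval H w
        = z.1 * (α * x + γ * aeval H w) + z.2 * (β * x + δ * aeval H w) := by noncomm_ring
      _ = z.1 * x + z.2 * aeval H w := by rw [J1, J2]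
end

section
/- Let Q be the 3×3 multiplicatively antisymmetric matrix [[1,λ,μ],[λ^{−1},1,ρ],[μ^{−1},ρ^{−1},1]] with λ,μ,ρ ∈ ℂ* algebraically independent over ℚ. Then there is no matrix G = (g_{ij}) ∈ GL₃(ℤ) such that for all i,j: (Qᵗ)_{ij} = ∏_{t,k} Q_{kt}^{g_{ki} g_{tj}}. In particular the identity that would be forced, g₁₁² g₂₂² g₃₃² = −1 in ℤ, has no solution. -/
open MvPolynomial in
theorem stmt18_mulindep (lam mu rho : ℂ)
    (h : AlgebraicIndependent ℚ ![lam, mu, rho]) (a b c : ℤ)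
    (hh : lam ^ a * mu ^ b * rho ^ c = 1) : a = 0 ∧ b = 0 ∧ c = 0 := by
  have hinj : Function.Injective (aeval (R := ℚ) ![lam, mu, rho]) := h
  have hl : lam ≠ 0 := fun h0 =>
    X_ne_zero (R := ℚ) (0 : Fin 3) (hinj (by simp [h0]))
  have hm : mu ≠ 0 := fun h0 =>
    X_ne_zero (R := ℚ) (1 : Fin 3) (hinj (by simp [h0]))
  have hr : rho ≠ 0 := fun h0 =>
    X_ne_zero (R := ℚ) (2 : Fin 3) (hinj (by simp [h0]))
  have e1 : lam ^ ((a.toNat : ℤ)) = lam ^ a * lam ^ (((-a).toNat : ℤ)) := by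
    rw [← zpow_add₀ hl]; congr 1; omega
  have e2 : mu ^ ((b.toNat : ℤ)) = mu ^ b * mu ^ (((-b).toNat : ℤ)) := by
    rw [← zpow_add₀ hm]; congr 1; omega
  have e3 : rho ^ ((c.toNat : ℤ)) = rho ^ c * rho ^ (((-c).toNat : ℤ)) := by
    rw [← zpow_add₀ hr]; congr 1; omega
  have t : lam ^ ((a.toNat : ℤ)) * mu ^ ((b.toNat : ℤ)) * rho ^ ((c.toNat : ℤ))
      = (lam ^ a * mu ^ b * rho ^ c) *
        (lam ^ (((-a).toNat : ℤ)) * mu ^ (((-b).toNat : ℤ)) * rho ^ (((-c).toNat : ℤ))) := by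
    rw [e1, e2, e3]; ring
  rw [hh, one_mul] at t
  have key : lam ^ a.toNat * mu ^ b.toNat * rho ^ c.toNat
      = lam ^ (-a).toNat * mu ^ (-b).toNat * rho ^ (-c).toNat := by
    simp only [zpow_natCast] at t; exact t
  have hpq : (X 0 ^ a.toNat * X 1 ^ b.toNat * X 2 ^ c.toNat : MvPolynomial (Fin 3) ℚ)
      = X 0 ^ (-a).toNat * X 1 ^ (-b).toNat * X 2 ^ (-c).toNat := by
    apply hinj
    simp only [map_mul, map_pow, aeval_X]
    simpa using key
  have hmon : ∀ (m n k : ℕ), (X 0 ^ m * X 1 ^ n * X 2 ^ k : MvPolynomial (Fin 3) ℚ)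
      = monomial (Finsupp.single 0 m + Finsupp.single 1 n + Finsupp.single 2 k) 1 := by
    intro m n k
    simp [X_pow_eq_monomial, monomial_mul]
  rw [hmon, hmon] at hpq
  rcases (monomial_eq_monomial_iff _ _ _ _).1 hpq with h' | h'
  · have h0 := DFunLike.congr_fun h'.1 (0 : Fin 3)
    have h1 := DFunLike.congr_fun h'.1 (1 : Fin 3)
    have h2 := DFunLike.congr_fun h'.1 (2 : Fin 3)
    simp [Finsupp.single_apply] at h0 h1 h2
    omega
  · exact absurd h'.1 one_ne_zero

theorem stmt18_arith (a b c p q r s t u : ℤ)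
    (hA : a*q - p*b = -1) (hD : a*t - s*b = 0) (hE : p*t - s*q = 0)
    (hF : a*r - p*c = 0) (hB : a*u - s*c = -1) (hG : p*u - s*r = 0)
    (hH : b*r - q*c = 0) (hI : b*u - t*c = 0) (hC : q*u - t*r = -1) : False := by
  have ht : t = 0 := by linear_combination -q*hD + b*hE + t*hA
  have hr0 : r = 0 := by linear_combination -q*hF + p*hH + r*hA
  subst ht; subst hr0
  have hqu : q * u = -1 := by linear_combination hC
  have hu : u ≠ 0 := by rintro rfl; simp at hqu
  have hq : q ≠ 0 := by rintro rfl; simp at hqu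
  have hpu : p * u = 0 := by linear_combination hG
  have hbu : b * u = 0 := by linear_combination hI
  have hsq0 : s * q = 0 := by linear_combination -hE
  have hp : p = 0 := by rcases mul_eq_zero.1 hpu with h' | h'; exact h'; exact absurd h' hu
  have hb : b = 0 := by rcases mul_eq_zero.1 hbu with h' | h'; exact h'; exact absurd h' hu
  have hs : s = 0 := by rcases mul_eq_zero.1 hsq0 with h' | h'; exact h'; exact absurd h' hq
  subst hp; subst hb; subst hs
  have haq : a * q = -1 := by linear_combination hA
  have hau : a * u = -1 := by linear_combination hB
  have hsq : (a*q*u)^2 = -1 := by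
    have e : (a*q*u)^2 = (a*q)*(a*u)*(q*u) := by ring
    rw [e, haq, hau, hqu]; norm_num
  linarith [sq_nonneg (a*q*u), hsq]

/-- For `Q = [[1,λ,μ],[λ⁻¹,1,ρ],[μ⁻¹,ρ⁻¹,1]]` with `λ,μ,ρ` algebraically
independent over `ℚ`, there is no `G ∈ GL₃(ℤ)` with
`(Qᵗ)_{ij} = ∏_{t,k} Q_{kt}^{g_{ki} g_{tj}}`; in particular the forced
equation `g₁₁² g₂₂² g₃₃² = -1` has no integer solution. -/
theorem stmt18 (lam mu rho : ℂ)
    (h : AlgebraicIndependent ℚ ![lam, mu, rho])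
    (Q : Matrix (Fin 3) (Fin 3) ℂ)
    (hQ : Q = !![1, lam, mu; lam⁻¹, 1, rho; mu⁻¹, rho⁻¹, 1]) :
    (¬∃ G : Matrix (Fin 3) (Fin 3) ℤ, (G.det = 1 ∨ G.det = -1) ∧
      ∀ i j : Fin 3,
        Q.transpose i j = ∏ t : Fin 3, ∏ k : Fin 3, Q k t ^ (G k i * G t j)) ∧
    ¬∃ g₁ g₂ g₃ : ℤ, g₁ ^ 2 * g₂ ^ 2 * g₃ ^ 2 = -1 := by
  constructor
  · rintro ⟨G, -, heq⟩
    subst hQ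
    have hinj : Function.Injective (MvPolynomial.aeval (R := ℚ) ![lam, mu, rho]) := h
    have hl : lam ≠ 0 := fun h0 =>
      MvPolynomial.X_ne_zero (R := ℚ) (0 : Fin 3) (hinj (by simp [h0]))
    have hm : mu ≠ 0 := fun h0 =>
      MvPolynomial.X_ne_zero (R := ℚ) (1 : Fin 3) (hinj (by simp [h0]))
    have hr : rho ≠ 0 := fun h0 =>
      MvPolynomial.X_ne_zero (R := ℚ) (2 : Fin 3) (hinj (by simp [h0]))
    have collect : ∀ p q r s u v : ℤ,
        lam ^ p * mu ^ q * (lam ^ r * rho ^ s) * (mu ^ u * rho ^ v)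
          = lam ^ (p+r) * mu ^ (q+u) * rho ^ (s+v) := by
      intro p q r s u v
      rw [zpow_add₀ hl, zpow_add₀ hm, zpow_add₀ hr]; ring
    have h01 := heq 0 1
    have h02 := heq 0 2
    have h12 := heq 1 2
    simp only [Matrix.transpose_apply, Fin.prod_univ_three, Matrix.cons_val', Matrix.cons_val_zero,
      Matrix.cons_val_one, Matrix.head_cons, Matrix.head_fin_const, Matrix.cons_val_two,
      Matrix.tail_cons, Matrix.empty_val', Matrix.cons_val_fin_one, Matrix.of_apply,
      one_zpow, one_mul, mul_one, inv_zpow, ← zpow_neg] at h01 h02 h12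
    rw [collect] at h01 h02 h12
    have k1 : lam ^ ((-(G 1 0 * G 0 1) + G 0 0 * G 1 1) + 1)
        * mu ^ (-(G 2 0 * G 0 1) + G 0 0 * G 2 1)
        * rho ^ (-(G 2 0 * G 1 1) + G 1 0 * G 2 1) = 1 := by
      rw [zpow_add_one₀ hl]
      calc lam ^ (-(G 1 0 * G 0 1) + G 0 0 * G 1 1) * lam
            * mu ^ (-(G 2 0 * G 0 1) + G 0 0 * G 2 1)
            * rho ^ (-(G 2 0 * G 1 1) + G 1 0 * G 2 1)
          = lam * (lam ^ (-(G 1 0 * G 0 1) + G 0 0 * G 1 1)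
            * mu ^ (-(G 2 0 * G 0 1) + G 0 0 * G 2 1)
            * rho ^ (-(G 2 0 * G 1 1) + G 1 0 * G 2 1)) := by ring
        _ = lam * lam⁻¹ := by rw [← h01]
        _ = 1 := mul_inv_cancel₀ hl
    have k2 : lam ^ (-(G 1 0 * G 0 2) + G 0 0 * G 1 2)
        * mu ^ ((-(G 2 0 * G 0 2) + G 0 0 * G 2 2) + 1)
        * rho ^ (-(G 2 0 * G 1 2) + G 1 0 * G 2 2) = 1 := by
      rw [zpow_add_one₀ hm]
      calc lam ^ (-(G 1 0 * G 0 2) + G 0 0 * G 1 2)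
            * (mu ^ (-(G 2 0 * G 0 2) + G 0 0 * G 2 2) * mu)
            * rho ^ (-(G 2 0 * G 1 2) + G 1 0 * G 2 2)
          = mu * (lam ^ (-(G 1 0 * G 0 2) + G 0 0 * G 1 2)
            * mu ^ (-(G 2 0 * G 0 2) + G 0 0 * G 2 2)
            * rho ^ (-(G 2 0 * G 1 2) + G 1 0 * G 2 2)) := by ring
        _ = mu * mu⁻¹ := by rw [← h02]
        _ = 1 := mul_inv_cancel₀ hm
    have k3 : lam ^ (-(G 1 1 * G 0 2) + G 0 1 * G 1 2)
        * mu ^ (-(G 2 1 * G 0 2) + G 0 1 * G 2 2)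
        * rho ^ ((-(G 2 1 * G 1 2) + G 1 1 * G 2 2) + 1) = 1 := by
      rw [zpow_add_one₀ hr]
      calc lam ^ (-(G 1 1 * G 0 2) + G 0 1 * G 1 2)
            * mu ^ (-(G 2 1 * G 0 2) + G 0 1 * G 2 2)
            * (rho ^ (-(G 2 1 * G 1 2) + G 1 1 * G 2 2) * rho)
          = rho * (lam ^ (-(G 1 1 * G 0 2) + G 0 1 * G 1 2)
            * mu ^ (-(G 2 1 * G 0 2) + G 0 1 * G 2 2)
            * rho ^ (-(G 2 1 * G 1 2) + G 1 1 * G 2 2)) := by ring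
        _ = rho * rho⁻¹ := by rw [← h12]
        _ = 1 := mul_inv_cancel₀ hr
    obtain ⟨eA, eD, eE⟩ := stmt18_mulindep lam mu rho h _ _ _ k1
    obtain ⟨eF, eB, eG⟩ := stmt18_mulindep lam mu rho h _ _ _ k2
    obtain ⟨eH, eI, eC⟩ := stmt18_mulindep lam mu rho h _ _ _ k3
    exact stmt18_arith (G 0 0) (G 0 1) (G 0 2) (G 1 0) (G 1 1) (G 1 2)
      (G 2 0) (G 2 1) (G 2 2)
      (by linarith) (by linarith) (by linarith) (by linarith) (by linarith)
      (by linarith) (by linarith) (by linarith) (by linarith)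
  · rintro ⟨g₁, g₂, g₃, hg⟩
    nlinarith [sq_nonneg g₁, sq_nonneg g₂, sq_nonneg g₃, sq_nonneg (g₁*g₂*g₃)]
end
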